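/- Let K, E, F ≥ 1 be integers, L ∈ [0,1]^{K×E} a loss matrix with rows ℓ_a, and Φ ∈ [F]^{K×E} a feedback matrix. Suppose that every pair of neighboring actions is globally observable, i.e., for all neighbors (a,b) there exists v : [K] × [F] → ℝ with ∑_{c=1}^K v(c, Φ_{ci}) = ℓ_{ai} − ℓ_{bi} for all i ∈ [E]. Then every pair of Pareto optimal actions (a,b) is globally observable: there exists v : [K] × [F] → ℝ with ∑_{c=1}^K v(c, Φ_{ci}) = ℓ_{ai} − ℓ_{bi} for all i ∈ [E]. -/

import Mathlib

open scoped BigOperators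

/-- The probability simplex in `ℝ^E`. -/
def probSimplex (E : ℕ) : Set (Fin E → ℝ) :=
  {u | (∀ i, 0 ≤ u i ∧ u i ≤ 1) ∧ ∑ i, u i = 1}

/-- The cell of action `a`: the set of distributions on which `a` is optimal. -/
def cell {K E : ℕ} (L : Fin K → Fin E → ℝ) (a : Fin K) : Set (Fin E → ℝ) :=
  {u | u ∈ probSimplex E ∧ ∀ b, ∑ i, L a i * u i ≤ ∑ i, L b i * u i}

/-- The dimension of a set: the dimension of its affine hull. -/
noncomputable def dimSet {E : ℕ} (s : Set (Fin E → ℝ)) : ℕ :=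
  Module.finrank ℝ (affineSpan ℝ s).direction

/-- Action `a` is Pareto optimal if its cell has dimension `E - 1`. -/
def ParetoOptimal {K E : ℕ} (L : Fin K → Fin E → ℝ) (a : Fin K) : Prop :=
  (cell L a).Nonempty ∧ dimSet (cell L a) = E - 1

/-- Pareto optimal actions `a` and `b` are neighbors if `C_a ∩ C_b` has dimension `E - 2`. -/
def Neighbors {K E : ℕ} (L : Fin K → Fin E → ℝ) (a b : Fin K) : Prop :=
  ParetoOptimal L a ∧ ParetoOptimal L b ∧
    (cell L a ∩ cell L b).Nonempty ∧ dimSet (cell L a ∩ cell L b) = E - 2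
/-- The pair `(a, b)` is globally observable: there is an estimation function `v` with
`∑_c v(c, Φ_{ci}) = ℓ_{ai} − ℓ_{bi}` for all outcomes `i`. -/
def GloballyObservable {K E F : ℕ} (L : Fin K → Fin E → ℝ) (Φ : Fin K → Fin E → Fin F)
    (a b : Fin K) : Prop :=
  ∃ v : Fin K → Fin F → ℝ, ∀ i, ∑ c, v c (Φ c i) = L a i - L b i


/-! Two Pareto cells that meet but are neither neighbours nor globally observable meet in a set
of dimension at most `E - 3`. Choosing `x ∈ C_a` and then `y ∈ C_b` generically, the segment
`[x, y]` avoids the affine spans of all these intersections, so any two Pareto cells meeting on it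
form a globally observable pair. Every point of the simplex lies in a Pareto cell, and the cells
are closed, so near any point of the segment every Pareto cell also contains that point. Hence
"the Pareto cells at `u` and at `u'` are pairwise globally observable" holds locally along the
connected segment, and by transitivity it holds between its endpoints. -/

open AffineMap Set Filter Topology

section AffineAvoidance

variable {V : Type*} [AddCommGroup V] [Module ℝ V]

theorem AffineSubspace.lineMap_mem_of_lineMap_mem {A : AffineSubspace ℝ V} {x y : V}
    {t t' : ℝ} (htt' : t ≠ t') (ht : lineMap x y t ∈ A) (ht' : lineMap x y t' ∈ A) (r : ℝ) :
    lineMap x y r ∈ A := by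
  have hreparam : lineMap x y r =
      lineMap (lineMap x y t) (lineMap x y t') ((r - t) / (t' - t)) := by
    have : t' - t ≠ 0 := sub_ne_zero.mpr htt'.symm
    simp only [lineMap_apply_module]
    match_scalars <;> field_simp <;> ring
  rw [hreparam]
  exact AffineMap.lineMap_mem _ ht ht'

theorem lineMap_notMem_affineSpan {s : Set V} {x y : V} (hx : x ∉ affineSpan ℝ s)
    (hy : y ∉ affineSpan ℝ (insert x s)) (t : ℝ) : lineMap x y t ∉ affineSpan ℝ s := by
  intro ht
  rcases eq_or_ne t 0 with rfl | ht0
  · exact hx (by simpa using ht)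
  have hmono := affineSpan_mono ℝ (subset_insert x s)
  have hx' : lineMap x y (0 : ℝ) ∈ affineSpan ℝ (insert x s) := by
    simpa using mem_affineSpan ℝ (mem_insert x s)
  exact hy (by simpa using
    AffineSubspace.lineMap_mem_of_lineMap_mem ht0.symm hx' (hmono ht) 1)

theorem Convex.exists_forall_notMem_affineSubspace {C : Set V} (hC : Convex ℝ C)
    (hne : C.Nonempty) {ι : Type*} (s : Finset ι) (A : ι → AffineSubspace ℝ V)
    (hA : ∀ i ∈ s, ¬ C ⊆ A i) : ∃ x ∈ C, ∀ i ∈ s, x ∉ A i := by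
  classical
  induction s using Finset.induction_on with
  | empty => exact ⟨hne.some, hne.some_mem, by simp⟩
  | @insert j s _ ih =>
    obtain ⟨x, hxC, hx⟩ := ih fun i hi => hA i (Finset.mem_insert_of_mem hi)
    obtain ⟨y, hyC, hyj⟩ := not_subset.1 (hA j (Finset.mem_insert_self j s))
    -- the line through `x` and `y` meets each `A i` in at most one parameter
    have hfin : (⋃ i ∈ insert j s, {t : ℝ | lineMap x y t ∈ A i}).Finite := by
      refine (Finset.finite_toSet _).biUnion fun i hi => Set.Subsingleton.finite ?_
      intro t ht t' ht'
      by_contra htt'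
      rcases Finset.mem_insert.1 hi with rfl | hi
      · exact hyj (by simpa using AffineSubspace.lineMap_mem_of_lineMap_mem htt' ht ht' 1)
      · exact hx i hi (by simpa using AffineSubspace.lineMap_mem_of_lineMap_mem htt' ht ht' 0)
    obtain ⟨t, ⟨ht0, ht1⟩, htA⟩ := ((Ioc_infinite zero_lt_one).sdiff hfin).nonempty
    refine ⟨lineMap x y t, hC.lineMap_mem hxC hyC ⟨ht0.le, ht1⟩, fun i hi hmem => ?_⟩
    exact htA (mem_biUnion hi hmem)

end AffineAvoidance

theorem Convex.affineSpan_inter_ball {V : Type*} [NormedAddCommGroup V] [NormedSpace ℝ V]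
    {C : Set V} (hC : Convex ℝ C) {u : V} (hu : u ∈ C) {ε : ℝ} (hε : 0 < ε) :
    affineSpan ℝ (C ∩ Metric.ball u ε) = affineSpan ℝ C := by
  refine le_antisymm (affineSpan_mono ℝ inter_subset_left) (affineSpan_le.2 fun p hp => ?_)
  have hnear : ∀ᶠ t in 𝓝[>] (0 : ℝ), lineMap u p t ∈ Metric.ball u ε ∧ t ∈ Icc (0 : ℝ) 1 := by
    have hcont : Tendsto (fun t : ℝ => lineMap u p t) (𝓝 0) (𝓝 u) := by
      simpa using (lineMap_continuous (p := u) (q := p) (R := ℝ)).tendsto 0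
    refine Eventually.and (nhdsWithin_le_nhds (hcont.eventually (Metric.ball_mem_nhds u hε))) ?_
    filter_upwards [Ioo_mem_nhdsGT zero_lt_one] with t ht using ⟨ht.1.le, ht.2.le⟩
  obtain ⟨t, ⟨htε, ht01⟩, ht0 : 0 < t⟩ := (hnear.and eventually_mem_nhdsWithin).exists
  have hu' : lineMap u p (0 : ℝ) ∈ affineSpan ℝ (C ∩ Metric.ball u ε) := by
    simpa using mem_affineSpan ℝ (show u ∈ C ∩ Metric.ball u ε from ⟨hu, Metric.mem_ball_self hε⟩)
  have ht' : lineMap u p t ∈ affineSpan ℝ (C ∩ Metric.ball u ε) :=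
    mem_affineSpan ℝ ⟨hC.lineMap_mem hu hp ht01, htε⟩
  simpa using AffineSubspace.lineMap_mem_of_lineMap_mem (ne_of_gt ht0).symm hu' ht' 1

section Dimension

variable {E : ℕ}

theorem dimSet_le_of_subset_affineSpan {s t : Set (Fin E → ℝ)} (h : s ⊆ affineSpan ℝ t) :
    dimSet s ≤ dimSet t :=
  Submodule.finrank_mono (AffineSubspace.direction_le (affineSpan_le.2 h))

theorem dimSet_lt_of_subset {s t : Set (Fin E → ℝ)} (hs : s.Nonempty) (hst : s ⊆ t)
    (ht : ¬ t ⊆ affineSpan ℝ s) : dimSet s < dimSet t := by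
  have hlt : affineSpan ℝ s < affineSpan ℝ t :=
    lt_of_le_of_ne (affineSpan_mono ℝ hst) fun heq => ht (heq ▸ subset_affineSpan ℝ t)
  exact Submodule.finrank_lt_finrank_of_lt
    (AffineSubspace.direction_lt_of_nonempty hlt ((affineSpan_nonempty ℝ).2 hs))

theorem dimSet_insert_le (x : Fin E → ℝ) (s : Set (Fin E → ℝ)) :
    dimSet (insert x s) ≤ dimSet s + 1 := by
  unfold dimSet
  rw [direction_affineSpan, direction_affineSpan]
  exact finrank_vectorSpan_insert_le_set ℝ s x

theorem probSimplex_eq_stdSimplex : probSimplex E = stdSimplex ℝ (Fin E) := by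
  ext u
  exact ⟨fun hu => ⟨fun i => (hu.1 i).1, hu.2⟩,
    fun hu => ⟨fun i => mem_Icc_of_mem_stdSimplex hu i, hu.2⟩⟩

theorem dimSet_probSimplex : dimSet (probSimplex E) = E - 1 := by
  classical
  rcases Nat.eq_zero_or_eq_succ_pred E with rfl | hE
  · have : probSimplex 0 = ∅ := eq_empty_of_forall_notMem fun u hu => by simpa using hu.2
    simp [dimSet, this]
  have hindep : AffineIndependent ℝ fun i j : Fin E => if i = j then (1 : ℝ) else 0 := by
    convert (Pi.basisFun ℝ (Fin E)).linearIndependent.affineIndependent using 1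
    · rfl
    · ext i j
      simp [Pi.single_apply, eq_comm]
  rw [dimSet, probSimplex_eq_stdSimplex, ← convexHull_basis_eq_stdSimplex, affineSpan_convexHull,
    direction_affineSpan, hindep.finrank_vectorSpan (by simpa using hE)]

theorem exists_segment_forall_notMem_affineSpan {C D : Set (Fin E → ℝ)} (hC : Convex ℝ C)
    (hCne : C.Nonempty) (hD : Convex ℝ D) (hDne : D.Nonempty) {ι : Type*} (s : Finset ι)
    (S : ι → Set (Fin E → ℝ)) (hSC : ∀ i ∈ s, dimSet (S i) < dimSet C)
    (hSD : ∀ i ∈ s, dimSet (S i) + 1 < dimSet D) :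
    ∃ x ∈ C, ∃ y ∈ D, ∀ i ∈ s, ∀ u ∈ segment ℝ x y, u ∉ affineSpan ℝ (S i) := by
  obtain ⟨x, hxC, hx⟩ := hC.exists_forall_notMem_affineSubspace hCne s
    (fun i => affineSpan ℝ (S i)) fun i hi hsub =>
      (hSC i hi).not_ge (dimSet_le_of_subset_affineSpan hsub)
  obtain ⟨y, hyD, hy⟩ := hD.exists_forall_notMem_affineSubspace hDne s
    (fun i => affineSpan ℝ (insert x (S i))) fun i hi hsub =>
      (hSD i hi).not_ge ((dimSet_le_of_subset_affineSpan hsub).trans (dimSet_insert_le x (S i)))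
  refine ⟨x, hxC, y, hyD, fun i hi u hu => ?_⟩
  obtain ⟨t, -, rfl⟩ := (segment_eq_image_lineMap ℝ x y ▸ hu :)
  exact lineMap_notMem_affineSpan (hx i hi) (hy i hi) t

end Dimension

section Cells

variable {K E : ℕ} {L : Fin K → Fin E → ℝ}

theorem convex_probSimplex : Convex ℝ (probSimplex E) :=
  probSimplex_eq_stdSimplex ▸ convex_stdSimplex ℝ (Fin E)

theorem cell_eq_inter (a : Fin K) :
    cell L a = probSimplex E ∩ ⋂ b, {u | ∑ i, L a i * u i ≤ ∑ i, L b i * u i} := by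
  rw [cell, ofPred_and, ofPred_mem_eq, ofPred_forall]

theorem convex_cell (a : Fin K) : Convex ℝ (cell L a) := by
  refine cell_eq_inter (L := L) a ▸ convex_probSimplex.inter (convex_iInter fun b => ?_)
  intro u hu v hv p q hp hq _
  simp only [mem_ofPred_eq, Pi.add_apply, Pi.smul_apply, smul_eq_mul, mul_add,
    Finset.sum_add_distrib, mul_left_comm _ p, mul_left_comm _ q, ← Finset.mul_sum] at hu hv ⊢
  exact add_le_add (mul_le_mul_of_nonneg_left hu hp) (mul_le_mul_of_nonneg_left hv hq)

theorem isClosed_cell (a : Fin K) : IsClosed (cell L a) :=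
  cell_eq_inter (L := L) a ▸ (probSimplex_eq_stdSimplex ▸ isClosed_stdSimplex ℝ (Fin E)).inter
    (isClosed_iInter fun b => isClosed_le (by fun_prop) (by fun_prop))

theorem exists_mem_cell [NeZero K] {u : Fin E → ℝ} (hu : u ∈ probSimplex E) :
    ∃ c, u ∈ cell L c := by
  obtain ⟨c, hc⟩ := Finite.exists_min fun c => ∑ i, L c i * u i
  exact ⟨c, hu, hc⟩

theorem eventually_mem_cell_imp (u : Fin E → ℝ) :
    ∀ᶠ u' in 𝓝 u, ∀ c, u' ∈ cell L c → u ∈ cell L c := by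
  refine eventually_all.2 fun c => ?_
  by_cases hu : u ∈ cell L c
  · exact Eventually.of_forall fun _ _ => hu
  · filter_upwards [(isClosed_cell c).isOpen_compl.mem_nhds hu] with u' hu' h
    exact absurd h hu'

theorem exists_paretoOptimal_mem_cell [NeZero K] {u : Fin E → ℝ} (hu : u ∈ probSimplex E) :
    ∃ c, ParetoOptimal L c ∧ u ∈ cell L c := by
  classical
  obtain ⟨ε, hε, hball⟩ := Metric.eventually_nhds_iff_ball.1 (eventually_mem_cell_imp (L := L) u)
  set C := probSimplex E ∩ Metric.ball u ε
  have hC : Convex ℝ C := convex_probSimplex.inter (convex_ball u ε)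
  have hdimC : dimSet C = E - 1 := by
    rw [← dimSet_probSimplex, dimSet, dimSet, convex_probSimplex.affineSpan_inter_ball hu hε]
  have hthin : ∀ c ∈ Finset.univ.filter fun c => ¬ ParetoOptimal L c,
      ¬ C ⊆ affineSpan ℝ (cell L c) := by
    intro c hc hsub
    refine (Finset.mem_filter.1 hc).2 ⟨?_, ?_⟩
    · exact (affineSpan_nonempty ℝ).1 ⟨u, hsub ⟨hu, Metric.mem_ball_self hε⟩⟩
    · have := dimSet_le_of_subset_affineSpan hsub
      have := dimSet_probSimplex (E := E) ▸ dimSet_le_of_subset_affineSpan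
        (fun v (hv : v ∈ cell L c) => subset_affineSpan ℝ (probSimplex E) hv.1)
      omega
  obtain ⟨x, ⟨hxΔ, hxε⟩, hx⟩ := hC.exists_forall_notMem_affineSubspace
    ⟨u, hu, Metric.mem_ball_self hε⟩ _ _ hthin
  obtain ⟨c, hxc⟩ := exists_mem_cell (L := L) hxΔ
  refine ⟨c, by_contra fun hc => hx c (by simpa using hc) (mem_affineSpan ℝ hxc), hball x hxε c hxc⟩

theorem dimSet_cell_inter_lt {c d : Fin K} (hne : (cell L c ∩ cell L d).Nonempty)
    (hcd : L c ≠ L d) : dimSet (cell L c ∩ cell L d) < E - 1 := by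
  rw [← dimSet_probSimplex]
  refine dimSet_lt_of_subset hne (fun u hu => hu.1.1) fun hsub => hcd ?_
  -- on `C_c ∩ C_d` the two losses agree, so its affine span lies in a hyperplane
  let H := (LinearMap.ker (∑ i, (L c i - L d i) • LinearMap.proj i :
    (Fin E → ℝ) →ₗ[ℝ] ℝ)).toAffineSubspace
  have hH : affineSpan ℝ (cell L c ∩ cell L d) ≤ H := by
    refine affineSpan_le.2 fun u ⟨huc, hud⟩ => ?_
    have h1 := huc.2 d
    have h2 := hud.2 c
    simp only [H, SetLike.mem_coe, Submodule.mem_toAffineSubspace, LinearMap.mem_ker,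
      LinearMap.coe_sum, LinearMap.coe_smul, LinearMap.coe_proj, Finset.sum_apply,
      Pi.smul_apply, Function.eval, smul_eq_mul, sub_mul, Finset.sum_sub_distrib]
    linarith
  funext i
  have := hH (hsub (single_mem_stdSimplex ℝ i |> (probSimplex_eq_stdSimplex ▸ ·)))
  simpa [H, sub_eq_zero, Pi.single_apply] using this

theorem dimSet_cell_inter_add_one_lt {c d : Fin K} (hc : ParetoOptimal L c)
    (hd : ParetoOptimal L d) (hne : (cell L c ∩ cell L d).Nonempty) (hcd : L c ≠ L d)
    (hnb : ¬ Neighbors L c d) : dimSet (cell L c ∩ cell L d) + 1 < E - 1 := by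
  have := dimSet_cell_inter_lt hne hcd
  have : dimSet (cell L c ∩ cell L d) ≠ E - 2 := fun h => hnb ⟨hc, hd, hne, h⟩
  omega

end Cells

namespace GloballyObservable

variable {K E F : ℕ} {L : Fin K → Fin E → ℝ} {Φ : Fin K → Fin E → Fin F} {c d e : Fin K}

theorem of_eq (h : L c = L d) : GloballyObservable L Φ c d :=
  ⟨0, fun i => by simp [h]⟩

theorem trans (h₁ : GloballyObservable L Φ c d) (h₂ : GloballyObservable L Φ d e) :
    GloballyObservable L Φ c e := by
  obtain ⟨v, hv⟩ := h₁
  obtain ⟨w, hw⟩ := h₂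
  exact ⟨v + w, fun i => by simp only [Pi.add_apply, Finset.sum_add_distrib, hv i, hw i]; ring⟩

end GloballyObservable

theorem globallyObservable_of_isPreconnected {K E F : ℕ} {L : Fin K → Fin E → ℝ}
    {Φ : Fin K → Fin E → Fin F} {s : Set (Fin E → ℝ)} (hs : IsPreconnected s)
    (hsΔ : s ⊆ probSimplex E)
    (hmeet : ∀ u ∈ s, ∀ c d, ParetoOptimal L c → ParetoOptimal L d → u ∈ cell L c →
      u ∈ cell L d → GloballyObservable L Φ c d)
    {x y : Fin E → ℝ} (hx : x ∈ s) (hy : y ∈ s) {a b : Fin K} (ha : ParetoOptimal L a)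
    (hb : ParetoOptimal L b) (hxa : x ∈ cell L a) (hyb : y ∈ cell L b) :
    GloballyObservable L Φ a b := by
  have : NeZero K := ⟨fun hK => (hK ▸ a).elim0⟩
  refine hs.induction₂'
    (fun x y => ∀ c d, ParetoOptimal L c → ParetoOptimal L d → x ∈ cell L c → y ∈ cell L d →
      GloballyObservable L Φ c d) (fun u hu => ?_) (fun u v w _ hv _ huv hvw => ?_)
    hx hy a b ha hb hxa hyb
  · filter_upwards [nhdsWithin_le_nhds (eventually_mem_cell_imp (L := L) u)] with u' hu'
    exact ⟨fun c d hc hd huc hu'd => hmeet u hu c d hc hd huc (hu' d hu'd),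
      fun c d hc hd hu'c hud => hmeet u hu c d hc hd (hu' c hu'c) hud⟩
  · intro c e hc he huc hwe
    obtain ⟨d, hd, hvd⟩ := exists_paretoOptimal_mem_cell (L := L) (hsΔ hv)
    exact (huv c d hc hd huc hvd).trans (hvw d e hd he hvd hwe)

theorem stmt15_general {K E F : ℕ}
    (L : Fin K → Fin E → ℝ)
    (Φ : Fin K → Fin E → Fin F)
    (hglob : ∀ a b : Fin K, Neighbors L a b → GloballyObservable L Φ a b)
    (a b : Fin K) (hPa : ParetoOptimal L a) (hPb : ParetoOptimal L b) :
    GloballyObservable L Φ a b := by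
  classical
  let bad := Finset.univ.filter fun p : Fin K × Fin K => ParetoOptimal L p.1 ∧
    ParetoOptimal L p.2 ∧ (cell L p.1 ∩ cell L p.2).Nonempty ∧ ¬ GloballyObservable L Φ p.1 p.2
  have hbad : ∀ p ∈ bad, dimSet (cell L p.1 ∩ cell L p.2) + 1 < E - 1 := fun p hp => by
    obtain ⟨hp₁, hp₂, hne, hno⟩ := (Finset.mem_filter.1 hp).2
    exact dimSet_cell_inter_add_one_lt hp₁ hp₂ hne (fun h => hno (.of_eq h))
      fun h => hno (hglob _ _ h)
  obtain ⟨x, hxa, y, hyb, hxy⟩ := exists_segment_forall_notMem_affineSpan (convex_cell a)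
    hPa.1 (convex_cell b) hPb.1 bad _ (fun p hp => hPa.2 ▸ Nat.lt_of_succ_lt (hbad p hp))
    fun p hp => hPb.2 ▸ hbad p hp
  refine globallyObservable_of_isPreconnected (convex_segment x y).isPreconnected
    (convex_probSimplex.segment_subset hxa.1 hyb.1) (fun u hu c d hc hd huc hud => ?_)
    (left_mem_segment ℝ x y) (right_mem_segment ℝ x y) hPa hPb hxa hyb
  by_contra hno
  exact hxy (c, d) (Finset.mem_filter.2 ⟨Finset.mem_univ _, hc, hd, ⟨u, huc, hud⟩, hno⟩) u hu
    (mem_affineSpan ℝ ⟨huc, hud⟩)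

theorem stmt15 {K E F : ℕ} (hK : 1 ≤ K) (hE : 1 ≤ E) (hF : 1 ≤ F)
    (L : Fin K → Fin E → ℝ) (hL : ∀ a i, L a i ∈ Set.Icc (0 : ℝ) 1)
    (Φ : Fin K → Fin E → Fin F)
    (hglob : ∀ a b : Fin K, Neighbors L a b → GloballyObservable L Φ a b)
    (a b : Fin K) (hPa : ParetoOptimal L a) (hPb : ParetoOptimal L b) :
    GloballyObservable L Φ a b :=
  stmt15_general L Φ hglob a b hPa hPb
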